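/- Let n ≥ d ≥ 1 and let A, A' ∈ ℝ^{n×d} have full column rank, with rows a_1ᵀ,…,a_nᵀ and a'_1ᵀ,…,a'_nᵀ respectively. Suppose A and A' differ only in the j-th row and ‖a_j − a'_j‖₂ ≤ ε₀. Let c ∈ (0,1] and let w ∈ ℝⁿ satisfy c ≤ w_i ≤ 1 for all i, with W = diag(w). If ε₀ ≤ 0.1·√c·σmin(A), then ‖(Aᵀ W A)^{−1} − (A'ᵀ W A')^{−1}‖ ≤ 8·c⁻²·κ(A)·σmin(A)⁻³·ε₀. -/

import Mathlib

open Matrix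

noncomputable def l2norm {m : Type*} [Fintype m] (x : m → ℝ) : ℝ :=
  Real.sqrt (∑ i, x i ^ 2)

/-- Spectral (operator) norm with respect to Euclidean norms. -/
noncomputable def specNorm {m k : Type*} [Fintype m] [Fintype k] (A : Matrix m k ℝ) : ℝ :=
  sSup {r | ∃ x : k → ℝ, l2norm x = 1 ∧ r = l2norm (A.mulVec x)}

/-- Largest singular value. -/
noncomputable def sigmaMax {m k : Type*} [Fintype m] [Fintype k] (A : Matrix m k ℝ) : ℝ :=
  specNorm A

/-- Smallest singular value. -/
noncomputable def sigmaMin {m k : Type*} [Fintype m] [Fintype k] (A : Matrix m k ℝ) : ℝ :=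
  sInf {r | ∃ x : k → ℝ, l2norm x = 1 ∧ r = l2norm (A.mulVec x)}

/-- Condition number. -/
noncomputable def kappa {m k : Type*} [Fintype m] [Fintype k] (A : Matrix m k ℝ) : ℝ :=
  sigmaMax A / sigmaMin A

/-- The weighted leverage score vector `f(w, A)`, with
`f(w,A)_i = w_i · a_iᵀ (Aᵀ W A)⁻¹ a_i` where `W = diag(w)`. -/
noncomputable def lewisF {n d : ℕ} (w : Fin n → ℝ) (A : Matrix (Fin n) (Fin d) ℝ)
    (i : Fin n) : ℝ :=
  w i * (A i ⬝ᵥ ((Aᵀ * Matrix.diagonal w * A)⁻¹).mulVec (A i))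

section Helpers
open scoped Matrix.Norms.L2Operator

lemma l2norm_eq {m : Type*} [Fintype m] (x : EuclideanSpace ℝ m) :
    l2norm (WithLp.equiv 2 (m → ℝ) x) = ‖x‖ := by
  rw [EuclideanSpace.norm_eq]
  simp [l2norm, sq_abs]

lemma l2norm_eq' {m : Type*} [Fintype m] (x : m → ℝ) :
    l2norm x = ‖(WithLp.equiv 2 (m → ℝ)).symm x‖ := by
  rw [← l2norm_eq]; rfl

lemma l2norm_nonneg {m : Type*} [Fintype m] (x : m → ℝ) : 0 ≤ l2norm x :=
  Real.sqrt_nonneg _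

lemma l2norm_eq_zero_iff {m : Type*} [Fintype m] (x : m → ℝ) :
    l2norm x = 0 ↔ x = 0 := by
  rw [l2norm_eq', norm_eq_zero]
  constructor
  · intro h; simpa using congrArg (WithLp.equiv 2 (m → ℝ)) h
  · intro h; simp [h]

lemma l2norm_smul {m : Type*} [Fintype m] (c : ℝ) (x : m → ℝ) :
    l2norm (c • x) = |c| * l2norm x := by
  rw [l2norm_eq', l2norm_eq',
    show (WithLp.equiv 2 (m → ℝ)).symm (c • x) = c • (WithLp.equiv 2 (m → ℝ)).symm x from rfl,
    norm_smul, Real.norm_eq_abs]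

lemma l2norm_mulVec_le {m k : Type*} [Fintype m] [Fintype k] [DecidableEq k] (A : Matrix m k ℝ)
    (x : k → ℝ) : l2norm (A.mulVec x) ≤ ‖A‖ * l2norm x := by
  have h := A.l2_opNorm_mulVec ((WithLp.equiv 2 (k → ℝ)).symm x)
  rw [l2norm_eq', l2norm_eq']
  exact h

lemma norm_le_of_mulVec {m k : Type*} [Fintype m] [Fintype k] [DecidableEq k]
    (A : Matrix m k ℝ) {C : ℝ} (hC : 0 ≤ C)
    (h : ∀ x : k → ℝ, l2norm (A.mulVec x) ≤ C * l2norm x) : ‖A‖ ≤ C := by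
  rw [Matrix.l2_opNorm_def]
  apply ContinuousLinearMap.opNorm_le_bound _ hC
  intro x
  have hx := h (WithLp.equiv 2 (k → ℝ) x)
  rw [l2norm_eq', l2norm_eq'] at hx
  exact hx

lemma exists_unit {k : Type*} [Fintype k] [DecidableEq k] [Nonempty k] :
    ∃ x : k → ℝ, l2norm x = 1 := by
  obtain ⟨i⟩ := ‹Nonempty k›
  refine ⟨fun j => if j = i then 1 else 0, ?_⟩
  have : (∑ j, (if j = i then (1:ℝ) else 0) ^ 2) = 1 := by
    rw [Finset.sum_eq_single i] <;> simp +contextual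
  simp [l2norm, this]

lemma triangle_l2 {m : Type*} [Fintype m] (x y : m → ℝ) :
    l2norm (x + y) ≤ l2norm x + l2norm y := by
  rw [l2norm_eq', l2norm_eq', l2norm_eq',
    show (WithLp.equiv 2 (m → ℝ)).symm (x + y)
      = (WithLp.equiv 2 (m → ℝ)).symm x + (WithLp.equiv 2 (m → ℝ)).symm y from rfl]
  exact norm_add_le _ _

lemma specNorm_eq {m k : Type*} [Fintype m] [Fintype k] [DecidableEq k] [Nonempty k]
    (A : Matrix m k ℝ) : specNorm A = ‖A‖ := by
  obtain ⟨x₀, hx₀⟩ := exists_unit (k := k)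
  set S := {r | ∃ x : k → ℝ, l2norm x = 1 ∧ r = l2norm (A.mulVec x)} with hS
  have hne : S.Nonempty := ⟨_, x₀, hx₀, rfl⟩
  have hbdd : BddAbove S := by
    refine ⟨‖A‖, ?_⟩
    rintro r ⟨x, hx, rfl⟩
    simpa [hx] using l2norm_mulVec_le A x
  have hub : sSup S ≤ ‖A‖ :=
    csSup_le hne (by rintro r ⟨x, hx, rfl⟩; simpa [hx] using l2norm_mulVec_le A x)
  have hnonneg : 0 ≤ sSup S := le_trans (l2norm_nonneg _) (le_csSup hbdd ⟨x₀, hx₀, rfl⟩)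
  refine le_antisymm hub ?_
  apply norm_le_of_mulVec A hnonneg
  intro x
  rcases eq_or_ne x 0 with rfl | hx
  · simp [Matrix.mulVec_zero, show l2norm (0 : m → ℝ) = 0 from (l2norm_eq_zero_iff _).2 rfl,
      show l2norm (0 : k → ℝ) = 0 from (l2norm_eq_zero_iff _).2 rfl]
  · have ht : 0 < l2norm x :=
      lt_of_le_of_ne (l2norm_nonneg x) (fun h => hx ((l2norm_eq_zero_iff x).1 h.symm))
    set t := l2norm x
    have hu : l2norm (t⁻¹ • x) = 1 := by
      rw [l2norm_smul, abs_of_pos (inv_pos.2 ht)]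
      field_simp
      rfl
    have hmem : l2norm (A.mulVec (t⁻¹ • x)) ∈ S := ⟨_, hu, rfl⟩
    have hle : l2norm (A.mulVec (t⁻¹ • x)) ≤ sSup S := le_csSup hbdd hmem
    rw [Matrix.mulVec_smul, l2norm_smul, abs_of_pos (inv_pos.2 ht)] at hle
    calc l2norm (A.mulVec x) = t * (t⁻¹ * l2norm (A.mulVec x)) := by field_simp
    _ ≤ t * sSup S := by exact mul_le_mul_of_nonneg_left hle ht.le
    _ = sSup S * t := mul_comm _ _

lemma sigmaMin_nonneg {m k : Type*} [Fintype m] [Fintype k] (A : Matrix m k ℝ) :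
    0 ≤ sigmaMin A :=
  Real.sInf_nonneg (by rintro r ⟨x, hx, rfl⟩; exact l2norm_nonneg _)

lemma sigmaMin_le_mulVec {m k : Type*} [Fintype m] [Fintype k] (A : Matrix m k ℝ)
    (x : k → ℝ) : sigmaMin A * l2norm x ≤ l2norm (A.mulVec x) := by
  rcases eq_or_ne x 0 with rfl | hx
  · simp [show l2norm (0 : k → ℝ) = 0 from (l2norm_eq_zero_iff _).2 rfl,
      Matrix.mulVec_zero, le_of_eq, (l2norm_eq_zero_iff (0 : m → ℝ)).2 rfl]
  · have ht : 0 < l2norm x :=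
      lt_of_le_of_ne (l2norm_nonneg x) (fun h => hx ((l2norm_eq_zero_iff x).1 h.symm))
    set t := l2norm x
    have hu : l2norm (t⁻¹ • x) = 1 := by
      rw [l2norm_smul, abs_of_pos (inv_pos.2 ht)]; field_simp; rfl
    have hbdd : BddBelow {r | ∃ y : k → ℝ, l2norm y = 1 ∧ r = l2norm (A.mulVec y)} :=
      ⟨0, by rintro r ⟨y, hy, rfl⟩; exact l2norm_nonneg _⟩
    have hle : sigmaMin A ≤ l2norm (A.mulVec (t⁻¹ • x)) := csInf_le hbdd ⟨_, hu, rfl⟩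
    rw [Matrix.mulVec_smul, l2norm_smul, abs_of_pos (inv_pos.2 ht)] at hle
    calc sigmaMin A * t ≤ (t⁻¹ * l2norm (A.mulVec x)) * t :=
          mul_le_mul_of_nonneg_right hle ht.le
    _ = l2norm (A.mulVec x) := by field_simp

lemma sigmaMin_pos {m k : Type*} [Fintype m] [Fintype k] [DecidableEq k] [Nonempty k]
    (A : Matrix m k ℝ) (hinj : ∀ x : k → ℝ, A.mulVec x = 0 → x = 0) :
    0 < sigmaMin A := by
  set S := {r | ∃ x : k → ℝ, l2norm x = 1 ∧ r = l2norm (A.mulVec x)} with hS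
  have hset : S = (fun y : EuclideanSpace ℝ k =>
      l2norm (A.mulVec (WithLp.equiv 2 (k → ℝ) y))) '' Metric.sphere 0 1 := by
    ext r
    constructor
    · rintro ⟨x, hx, rfl⟩
      refine ⟨(WithLp.equiv 2 (k → ℝ)).symm x, ?_, rfl⟩
      rw [mem_sphere_zero_iff_norm, ← l2norm_eq']
      exact hx
    · rintro ⟨y, hy, rfl⟩
      rw [mem_sphere_zero_iff_norm] at hy
      exact ⟨WithLp.equiv 2 (k → ℝ) y, by rw [l2norm_eq']; exact hy, rfl⟩
  have hcont : Continuous (fun y : EuclideanSpace ℝ k =>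
      l2norm (A.mulVec (WithLp.equiv 2 (k → ℝ) y))) := by
    have : (fun y : EuclideanSpace ℝ k => l2norm (A.mulVec (WithLp.equiv 2 (k → ℝ) y)))
        = fun y => ‖Matrix.toEuclideanLin A y‖ := by
      funext y
      rw [l2norm_eq', Matrix.toEuclideanLin_apply]
      rfl
    rw [this]
    exact (LinearMap.continuous_of_finiteDimensional _).norm
  have hcomp : IsCompact S := by
    rw [hset]
    exact (isCompact_sphere (0 : EuclideanSpace ℝ k) 1).image hcont
  obtain ⟨x₀, hx₀⟩ := exists_unit (k := k)
  have hne : S.Nonempty := ⟨_, x₀, hx₀, rfl⟩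
  have hmem : sInf S ∈ S := hcomp.sInf_mem hne
  obtain ⟨x, hx, hval⟩ := hmem
  rw [show sigmaMin A = sInf S from rfl, hval]
  rcases (lt_or_eq_of_le (l2norm_nonneg (A.mulVec x))) with h | h
  · exact h
  · exfalso
    have : A.mulVec x = 0 := (l2norm_eq_zero_iff _).1 h.symm
    have hx0 : x = 0 := hinj x this
    rw [hx0, (l2norm_eq_zero_iff _).2 rfl] at hx
    norm_num at hx

lemma abs_dot_le {m : Type*} [Fintype m] (u v : m → ℝ) :
    |u ⬝ᵥ v| ≤ l2norm u * l2norm v := by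
  have h := abs_real_inner_le_norm ((WithLp.equiv 2 (m → ℝ)).symm u)
    ((WithLp.equiv 2 (m → ℝ)).symm v)
  rw [l2norm_eq', l2norm_eq' v]
  have hinner : (inner ℝ ((WithLp.equiv 2 (m → ℝ)).symm u) ((WithLp.equiv 2 (m → ℝ)).symm v) : ℝ)
      = u ⬝ᵥ v := by
    rw [PiLp.inner_apply]
    simp [dotProduct, RCLike.inner_apply, mul_comm]
  rwa [hinner] at h

lemma norm_single_row {n d : ℕ} (D : Matrix (Fin n) (Fin d) ℝ) (j : Fin n)
    (h0 : ∀ i, i ≠ j → D i = 0) : ‖D‖ ≤ l2norm (D j) := by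
  apply norm_le_of_mulVec D (l2norm_nonneg _)
  intro x
  have hv : ∀ i, (D.mulVec x) i = if i = j then D j ⬝ᵥ x else 0 := by
    intro i
    by_cases hi : i = j
    · simp [hi, Matrix.mulVec]
    · simp [hi, Matrix.mulVec, h0 i hi]
  have : l2norm (D.mulVec x) = |D j ⬝ᵥ x| := by
    unfold l2norm
    rw [Finset.sum_eq_single j]
    · rw [hv j]; simp [Real.sqrt_sq_eq_abs]
    · intro i _ hi; rw [hv i]; simp [hi]
    · simp
  rw [this]
  exact abs_dot_le _ _

lemma norm_diagonal_le_one {n : ℕ} (w : Fin n → ℝ) (hw : ∀ i, |w i| ≤ 1) :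
    ‖Matrix.diagonal w‖ ≤ 1 := by
  apply norm_le_of_mulVec _ zero_le_one
  intro x
  rw [one_mul]
  unfold l2norm
  apply Real.sqrt_le_sqrt
  apply Finset.sum_le_sum
  intro i _
  rw [Matrix.mulVec_diagonal]
  calc (w i * x i)^2 = (w i)^2 * (x i)^2 := by ring
  _ ≤ 1 * (x i)^2 := by
      apply mul_le_mul_of_nonneg_right _ (sq_nonneg _)
      have := hw i
      nlinarith [abs_nonneg (w i), sq_abs (w i)]
  _ = (x i)^2 := one_mul _

lemma quad_form {n d : ℕ} (A : Matrix (Fin n) (Fin d) ℝ) (w : Fin n → ℝ) (x : Fin d → ℝ) :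
    x ⬝ᵥ ((Aᵀ * Matrix.diagonal w * A).mulVec x) = ∑ i, w i * ((A.mulVec x) i)^2 := by
  rw [← Matrix.mulVec_mulVec, ← Matrix.mulVec_mulVec]
  rw [Matrix.dotProduct_mulVec, Matrix.vecMul_transpose]
  simp [dotProduct, Matrix.mulVec_diagonal]
  ring_nf
  apply Finset.sum_congr rfl
  intro i _
  ring

lemma rank_inj {n d : ℕ} (A : Matrix (Fin n) (Fin d) ℝ) (h : A.rank = d) :
    ∀ x : Fin d → ℝ, A.mulVec x = 0 → x = 0 := by
  have hker : LinearMap.ker A.mulVecLin = ⊥ := by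
    have hr := LinearMap.finrank_range_add_finrank_ker A.mulVecLin
    rw [Module.finrank_fin_fun] at hr
    have hrank : Module.finrank ℝ (LinearMap.range A.mulVecLin) = d := h
    rw [hrank] at hr
    have : Module.finrank ℝ (LinearMap.ker A.mulVecLin) = 0 := by omega
    exact Submodule.finrank_eq_zero.mp this
  intro x hx
  have : x ∈ LinearMap.ker A.mulVecLin := by
    rw [LinearMap.mem_ker, Matrix.mulVecLin_apply]; exact hx
  rwa [hker, Submodule.mem_bot] at this

lemma l2_norm_transpose {n d : ℕ} (A : Matrix (Fin n) (Fin d) ℝ) : ‖Aᵀ‖ = ‖A‖ := by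
  rw [← Matrix.l2_opNorm_conjTranspose A]
  rfl

lemma sq_l2norm {m : Type*} [Fintype m] (x : m → ℝ) : (l2norm x)^2 = ∑ i, x i ^ 2 :=
  Real.sq_sqrt (Finset.sum_nonneg fun i _ => sq_nonneg _)

lemma gram_lower {n d : ℕ} (A : Matrix (Fin n) (Fin d) ℝ) (w : Fin n → ℝ) (c s : ℝ)
    (hc0 : 0 < c) (hs : 0 < s)
    (hw : ∀ i, c ≤ w i ∧ w i ≤ 1)
    (hA : ∀ x : Fin d → ℝ, s * l2norm x ≤ l2norm (A.mulVec x)) :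
    ∀ x : Fin d → ℝ, (c * s^2) * l2norm x ≤ l2norm ((Aᵀ * Matrix.diagonal w * A).mulVec x) := by
  intro x
  set M := Aᵀ * Matrix.diagonal w * A with hM
  have key : (c * s^2) * (l2norm x)^2 ≤ l2norm x * l2norm (M.mulVec x) := by
    have h1 : (c * s^2) * (l2norm x)^2 ≤ c * (l2norm (A.mulVec x))^2 := by
      have h' : (s * l2norm x)^2 ≤ (l2norm (A.mulVec x))^2 :=
        pow_le_pow_left₀ (mul_nonneg hs.le (l2norm_nonneg x)) (hA x) 2
      nlinarith [hc0.le]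
    have h2 : c * (l2norm (A.mulVec x))^2 ≤ x ⬝ᵥ (M.mulVec x) := by
      rw [quad_form, sq_l2norm, Finset.mul_sum]
      apply Finset.sum_le_sum
      intro i _
      exact mul_le_mul_of_nonneg_right (hw i).1 (sq_nonneg _)
    have h3 : x ⬝ᵥ (M.mulVec x) ≤ l2norm x * l2norm (M.mulVec x) :=
      le_trans (le_abs_self _) (abs_dot_le _ _)
    linarith
  rcases eq_or_ne x 0 with rfl | hx
  · simp [(l2norm_eq_zero_iff (0 : Fin d → ℝ)).2 rfl]
  · have ht : 0 < l2norm x := lt_of_le_of_ne (l2norm_nonneg x)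
      (fun h' => hx ((l2norm_eq_zero_iff x).1 h'.symm))
    have := mul_le_mul_of_nonneg_left key (le_of_lt (inv_pos.2 ht))
    calc (c * s^2) * l2norm x = (l2norm x)⁻¹ * ((c * s^2) * (l2norm x)^2) := by
          field_simp
    _ ≤ (l2norm x)⁻¹ * (l2norm x * l2norm (M.mulVec x)) := this
    _ = l2norm (M.mulVec x) := by field_simp

lemma gram_isUnit {n d : ℕ} (A : Matrix (Fin n) (Fin d) ℝ) (w : Fin n → ℝ) (c s : ℝ)
    (hc0 : 0 < c) (hs : 0 < s)
    (hw : ∀ i, c ≤ w i ∧ w i ≤ 1)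
    (hA : ∀ x : Fin d → ℝ, s * l2norm x ≤ l2norm (A.mulVec x)) :
    IsUnit (Aᵀ * Matrix.diagonal w * A).det := by
  rw [← Matrix.isUnit_iff_isUnit_det]
  rw [← Matrix.mulVec_injective_iff_isUnit]
  have key : ∀ x : Fin d → ℝ, (Aᵀ * Matrix.diagonal w * A).mulVec x = 0 → x = 0 := ?_
  · intro x y hxy
    have := key (x - y) (by rw [Matrix.mulVec_sub, hxy, sub_self])
    exact sub_eq_zero.mp this
  intro x hx
  have := gram_lower A w c s hc0 hs hw hA x
  rw [hx, (l2norm_eq_zero_iff (0 : Fin d → ℝ)).2 rfl] at this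
  have hx0 : l2norm x ≤ 0 := by nlinarith [mul_pos hc0 (pow_pos hs 2)]
  exact (l2norm_eq_zero_iff x).1 (le_antisymm hx0 (l2norm_nonneg x))

lemma gram_inv_norm {n d : ℕ} (A : Matrix (Fin n) (Fin d) ℝ) (w : Fin n → ℝ) (c s : ℝ)
    (hc0 : 0 < c) (hs : 0 < s)
    (hw : ∀ i, c ≤ w i ∧ w i ≤ 1)
    (hA : ∀ x : Fin d → ℝ, s * l2norm x ≤ l2norm (A.mulVec x)) :
    ‖(Aᵀ * Matrix.diagonal w * A)⁻¹‖ ≤ (c * s^2)⁻¹ := by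
  set M := Aᵀ * Matrix.diagonal w * A with hM
  have hu : IsUnit M.det := gram_isUnit A w c s hc0 hs hw hA
  have hMM : M * M⁻¹ = 1 := Matrix.mul_nonsing_inv M hu
  have hα : 0 < c * s^2 := by positivity
  apply norm_le_of_mulVec _ (le_of_lt (inv_pos.2 hα))
  intro y
  have h1 := gram_lower A w c s hc0 hs hw hA (M⁻¹.mulVec y)
  rw [Matrix.mulVec_mulVec, hMM, Matrix.one_mulVec] at h1
  calc l2norm (M⁻¹.mulVec y) = (c*s^2)⁻¹ * ((c*s^2) * l2norm (M⁻¹.mulVec y)) := by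
        field_simp
  _ ≤ (c*s^2)⁻¹ * l2norm y := mul_le_mul_of_nonneg_left h1 (le_of_lt (inv_pos.2 hα))

lemma final_arith (c s N ε₀ : ℝ) (hc0 : 0 < c) (hs : 0 < s) (hε0 : 0 ≤ ε₀)
    (hεs : ε₀ ≤ 0.1 * s) (hsN : s ≤ N) :
    (c * s^2)⁻¹ * ((N + ε₀) * ε₀ + ε₀ * N) * (c * (s - ε₀)^2)⁻¹ ≤
      8 * c⁻¹ ^ 2 * (N / s) * (s ^ 3)⁻¹ * ε₀ := by
  have hs' : 0 < s - ε₀ := by linarith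
  have hN0 : 0 < N := lt_of_lt_of_le hs hsN
  have e3 : (c * s^2)⁻¹ * ((N + ε₀) * ε₀ + ε₀ * N) * (c * (s - ε₀)^2)⁻¹
      = ((2*N + ε₀) * ε₀) / (c^2 * s^2 * (s - ε₀)^2) := by
    field_simp
    ring
  have e4 : 8 * c⁻¹ ^ 2 * (N / s) * (s ^ 3)⁻¹ * ε₀ = (8 * N * ε₀) / (c^2 * s^4) := by
    field_simp
  rw [e3, e4, div_le_div_iff₀ (by positivity) (by positivity)]
  have key : (2*N + ε₀) * s^2 ≤ 8 * N * (s - ε₀)^2 := by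
    nlinarith [mul_le_mul_of_nonneg_left hεs hN0.le, mul_le_mul_of_nonneg_left hsN hε0,
      mul_pos hN0 hs, mul_nonneg hε0 hs.le]
  nlinarith [mul_le_mul_of_nonneg_left key (mul_nonneg hε0 (by positivity : (0:ℝ) ≤ c^2 * s^2)),
    hε0, hs.le, hN0.le]

end Helpers

theorem perturbation_AWA_inverse
    (n d : ℕ) (hd : 1 ≤ d) (hdn : d ≤ n)
    (A A' : Matrix (Fin n) (Fin d) ℝ)
    (hrankA : A.rank = d) (hrankA' : A'.rank = d)
    (j : Fin n) (ε₀ : ℝ)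
    (hrow : ∀ i : Fin n, i ≠ j → A i = A' i)
    (hj : l2norm (A j - A' j) ≤ ε₀)
    (c : ℝ) (hc0 : 0 < c) (hc1 : c ≤ 1)
    (w : Fin n → ℝ) (hw : ∀ i, c ≤ w i ∧ w i ≤ 1)
    (hε₀ : ε₀ ≤ 0.1 * Real.sqrt c * sigmaMin A) :
    specNorm ((Aᵀ * Matrix.diagonal w * A)⁻¹ - (A'ᵀ * Matrix.diagonal w * A')⁻¹) ≤
      8 * c⁻¹ ^ 2 * kappa A * (sigmaMin A ^ 3)⁻¹ * ε₀ := by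
  open scoped Matrix.Norms.L2Operator in
  haveI : Nonempty (Fin d) := ⟨⟨0, hd⟩⟩
  set W := Matrix.diagonal w with hWdef
  set M := Aᵀ * W * A with hMdef
  set M' := A'ᵀ * W * A' with hM'def
  set s := sigmaMin A with hsdef
  clear_value s
  have hs : 0 < s := by rw [hsdef]; exact sigmaMin_pos A (rank_inj A hrankA)
  have hA : ∀ x : Fin d → ℝ, s * l2norm x ≤ l2norm (A.mulVec x) := by
    rw [hsdef]; exact sigmaMin_le_mulVec A
  have hε0 : 0 ≤ ε₀ := le_trans (l2norm_nonneg _) hj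
  have hsqrtc : Real.sqrt c ≤ 1 := Real.sqrt_le_one.mpr hc1
  have hεs : ε₀ ≤ 0.1 * s := by
    nlinarith [Real.sqrt_nonneg c, hs.le]
  -- norm of the row difference
  have hD : ‖A - A'‖ ≤ ε₀ := by
    refine le_trans (norm_single_row (A - A') j ?_) ?_
    · intro i hi
      funext l
      simp [Matrix.sub_apply, hrow i hi]
    · exact hj
  -- lower bound for A'
  have hs' : 0 < s - ε₀ := by linarith
  have hA' : ∀ x : Fin d → ℝ, (s - ε₀) * l2norm x ≤ l2norm (A'.mulVec x) := by
    intro x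
    have htri : l2norm (A.mulVec x) ≤ l2norm (A'.mulVec x) + l2norm ((A - A').mulVec x) := by
      have : A.mulVec x = A'.mulVec x + (A - A').mulVec x := by
        rw [Matrix.sub_mulVec]; abel
      rw [this]
      exact triangle_l2 _ _
    have hDx : l2norm ((A - A').mulVec x) ≤ ε₀ * l2norm x :=
      le_trans (l2norm_mulVec_le _ x) (mul_le_mul_of_nonneg_right hD (l2norm_nonneg x))
    have := hA x
    nlinarith [l2norm_nonneg x]
  -- weights have absolute value at most one
  have hwabs : ∀ i, |w i| ≤ 1 := by
    intro i
    rw [abs_le]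
    constructor
    · linarith [(hw i).1]
    · exact (hw i).2
  have hWn : ‖W‖ ≤ 1 := norm_diagonal_le_one w hwabs
  -- invertibility
  have huM : IsUnit M.det := gram_isUnit A w c s hc0 hs hw hA
  have huM' : IsUnit M'.det := gram_isUnit A' w c (s - ε₀) hc0 hs' hw hA'
  have hMinv : ‖M⁻¹‖ ≤ (c * s^2)⁻¹ := gram_inv_norm A w c s hc0 hs hw hA
  have hM'inv : ‖M'⁻¹‖ ≤ (c * (s - ε₀)^2)⁻¹ := gram_inv_norm A' w c (s - ε₀) hc0 hs' hw hA'
  -- algebraic identity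
  have e1 : M⁻¹ * M = 1 := Matrix.nonsing_inv_mul M huM
  have e2 : M' * M'⁻¹ = 1 := Matrix.mul_nonsing_inv M' huM'
  have hid : M⁻¹ - M'⁻¹ = M⁻¹ * (M' - M) * M'⁻¹ := by
    have h1 : M⁻¹ * (M' - M) * M'⁻¹ = M⁻¹ * M' * M'⁻¹ - M⁻¹ * M * M'⁻¹ := by
      rw [Matrix.mul_sub, Matrix.sub_mul]
    rw [h1, mul_assoc M⁻¹ M' M'⁻¹, e2, mul_one, e1, one_mul]
  -- bound on M' - M
  have hsplit : M' - M = A'ᵀ * W * (A' - A) + (A' - A)ᵀ * W * A := by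
    rw [Matrix.transpose_sub, Matrix.mul_sub, Matrix.sub_mul, Matrix.sub_mul]
    abel
  have hDrev : ‖A' - A‖ ≤ ε₀ := by rwa [norm_sub_rev] at hD
  have hA'n : ‖A'‖ ≤ ‖A‖ + ε₀ := by
    have : A' = A - (A - A') := by abel
    rw [this]
    exact le_trans (norm_sub_le _ _) (by linarith)
  have hterm1 : ‖A'ᵀ * W * (A' - A)‖ ≤ (‖A‖ + ε₀) * ε₀ := by
    calc ‖A'ᵀ * W * (A' - A)‖ ≤ ‖A'ᵀ * W‖ * ‖A' - A‖ := Matrix.l2_opNorm_mul _ _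
    _ ≤ (‖A'ᵀ‖ * ‖W‖) * ‖A' - A‖ :=
        mul_le_mul_of_nonneg_right (Matrix.l2_opNorm_mul _ _) (norm_nonneg _)
    _ ≤ (‖A‖ + ε₀) * ε₀ := by
        rw [l2_norm_transpose]
        have h1 : ‖A'‖ * ‖W‖ ≤ (‖A‖ + ε₀) * 1 :=
          mul_le_mul hA'n hWn (norm_nonneg _) (by positivity)
        rw [mul_one] at h1
        exact mul_le_mul h1 hDrev (norm_nonneg _) (by positivity)
  have hterm2 : ‖(A' - A)ᵀ * W * A‖ ≤ ε₀ * ‖A‖ := by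
    calc ‖(A' - A)ᵀ * W * A‖ ≤ ‖(A' - A)ᵀ * W‖ * ‖A‖ := Matrix.l2_opNorm_mul _ _
    _ ≤ (‖(A' - A)ᵀ‖ * ‖W‖) * ‖A‖ :=
        mul_le_mul_of_nonneg_right (Matrix.l2_opNorm_mul _ _) (norm_nonneg _)
    _ ≤ ε₀ * ‖A‖ := by
        rw [l2_norm_transpose]
        have h1 : ‖A' - A‖ * ‖W‖ ≤ ε₀ * 1 :=
          mul_le_mul hDrev hWn (norm_nonneg _) hε0
        rw [mul_one] at h1
        exact mul_le_mul_of_nonneg_right h1 (norm_nonneg _)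
  have hdiff : ‖M' - M‖ ≤ (‖A‖ + ε₀) * ε₀ + ε₀ * ‖A‖ := by
    rw [hsplit]
    exact le_trans (norm_add_le _ _) (add_le_add hterm1 hterm2)
  -- main norm bound
  have hmain : ‖M⁻¹ - M'⁻¹‖ ≤ (c * s^2)⁻¹ * ((‖A‖ + ε₀) * ε₀ + ε₀ * ‖A‖) * (c * (s - ε₀)^2)⁻¹ := by
    rw [hid]
    calc ‖M⁻¹ * (M' - M) * M'⁻¹‖ ≤ ‖M⁻¹ * (M' - M)‖ * ‖M'⁻¹‖ := Matrix.l2_opNorm_mul _ _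
    _ ≤ (‖M⁻¹‖ * ‖M' - M‖) * ‖M'⁻¹‖ :=
        mul_le_mul_of_nonneg_right (Matrix.l2_opNorm_mul _ _) (norm_nonneg _)
    _ ≤ ((c * s^2)⁻¹ * ((‖A‖ + ε₀) * ε₀ + ε₀ * ‖A‖)) * (c * (s - ε₀)^2)⁻¹ := by
        apply mul_le_mul _ hM'inv (norm_nonneg _)
        · positivity
        · exact mul_le_mul hMinv hdiff (norm_nonneg _) (by positivity)
  -- relate specNorm to the operator norm, and sigmaMax/kappa to ‖A‖
  have hspec : specNorm (M⁻¹ - M'⁻¹) = ‖M⁻¹ - M'⁻¹‖ := specNorm_eq _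
  have hNA : sigmaMax A = ‖A‖ := specNorm_eq A
  have hsN : s ≤ ‖A‖ := by
    obtain ⟨x₀, hx₀⟩ := exists_unit (k := Fin d)
    have h1 := hA x₀
    have h2 := l2norm_mulVec_le A x₀
    rw [hx₀] at h1 h2
    simpa using le_trans h1 h2
  have hN0 : 0 < ‖A‖ := lt_of_lt_of_le hs hsN
  -- final arithmetic
  rw [hspec]
  refine le_trans hmain ?_
  have hkappa : kappa A = ‖A‖ / s := by rw [kappa, hNA, hsdef]
  rw [hkappa]
  exact final_arith c s ‖A‖ ε₀ hc0 hs hε0 hεs hsN
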